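/- arXiv:2005.04453 — 2 statements merged into one kernel-verified Lean document; each statement's English description precedes it below -/
import Mathlib

section
/- Given a commutative cube of graphs where the bottom face and top face are pushouts along monomorphisms, the back vertical faces are pullbacks, the maps λ₁ : X → B and λ₂ : Y → C (the back vertical maps) and the legs of the bottom cospan satisfy the right lifting property against s : • → (•→•) (i.e., are 1-fibrations on a chosen class of edges), and the relevant legs are monomorphisms, the induced map μ : Z → D between the pushouts satisfies the same right lifting property. -/
open CategoryTheory CategoryTheory.Limits

/-- The category of directed graphs, presented as functors from the walking parallel pair
(the value at `zero` is the set of edges, the value at `one` the set of vertices, and the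
two maps are source and target). -/
abbrev Gph : Type 1 := WalkingParallelPair ⥤ Type

/-- The graph with one vertex and no edge. -/
def walkingNode : Gph :=
  parallelPair (X := PEmpty.{1}) (Y := PUnit.{1}) (TypeCat.ofHom PEmpty.elim) (TypeCat.ofHom PEmpty.elim)

/-- The walking edge: two vertices and a single edge from `false` to `true`. -/
def walkingEdge : Gph :=
  parallelPair (X := PUnit.{1}) (Y := Bool) (TypeCat.ofHom fun _ => false) (TypeCat.ofHom fun _ => true)

/-- The inclusion of the one-node graph as the source of the walking edge. -/
def srcNode : walkingNode ⟶ walkingEdge :=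
  parallelPairHom _ _ _ _ (TypeCat.ofHom PEmpty.elim) (TypeCat.ofHom fun _ => false)
    (by ext x; exact x.elim) (by ext x; exact x.elim)

/-!
A map of graphs is a fibration iff edges lift at every vertex, so it suffices to lift an edge
`e` of `D` out of `μ z`. The vertex `z` comes from `Y` or from `X`; by symmetry say `z = f' y`.
Since pushouts of graphs are computed separately on vertices and edges, `e` comes from `C` or
from `B`. If from `C`, injectivity of `i'` puts its source at `λ₂ y`, and it lifts along `λ₂`.
If from `B`, its source lies in the images of both `C` and `B`, hence in `A`, because a pushout
of sets along an injection is also a pullback; the back face being a pullback, `y` then comes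
from a vertex `u` of `W`, and `e` lifts along `λ₁` at `g u`, which `g'` sends to `f' y`.
-/

universe u

lemma NatTrans.app_app_eq_of_comp_eq {J : Type*} [Category J] {G₁ G₂ G₃ G₄ : J ⥤ Type u}
    {a : G₁ ⟶ G₂} {b : G₂ ⟶ G₄} {c : G₁ ⟶ G₃} {d : G₃ ⟶ G₄} (h : a ≫ b = c ≫ d)
    (k : J) (x : G₁.obj k) :
    b.app k (a.app k x) = d.app k (c.app k x) := by
  simpa using ConcreteCategory.congr_hom (congr_app h k) x

open WalkingParallelPair WalkingParallelPairHom

def LiftsEdgesFrom {G H : Gph} (p : G ⟶ H) (v : G.obj one) : Prop :=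
  ∀ e : H.obj zero, H.map left e = p.app one v →
    ∃ e' : G.obj zero, G.map left e' = v ∧ p.app zero e' = e

namespace Gph

def edgeHom {G : Gph} (e : G.obj zero) : walkingEdge ⟶ G where
  app
    | zero => TypeCat.ofHom fun _ => e
    | one => TypeCat.ofHom fun b => bif b then G.map right e else G.map left e
  naturality k k' h := by
    change WalkingParallelPairHom k k' at h
    cases h
    · rfl
    · rfl
    · simp

def nodeHom {G : Gph} (v : G.obj one) : walkingNode ⟶ G where
  app
    | zero => TypeCat.ofHom PEmpty.elim
    | one => TypeCat.ofHom fun _ => v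
  naturality k k' h := by
    change WalkingParallelPairHom k k' at h
    cases h
    · ext x; exact x.elim
    · ext x; exact x.elim
    · simp

lemma walkingNode_hom_ext {G : Gph} {u v : walkingNode ⟶ G}
    (h : u.app one PUnit.unit = v.app one PUnit.unit) : u = v := by
  ext k x
  cases k
  · exact x.elim
  · exact h

lemma walkingEdge_hom_app_false {G : Gph} (u : walkingEdge ⟶ G) :
    u.app one false = G.map left (u.app zero PUnit.unit) :=
  NatTrans.naturality_apply u left PUnit.unit

lemma walkingEdge_hom_app_true {G : Gph} (u : walkingEdge ⟶ G) :
    u.app one true = G.map right (u.app zero PUnit.unit) :=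
  NatTrans.naturality_apply u right PUnit.unit

lemma walkingEdge_hom_ext {G : Gph} {u v : walkingEdge ⟶ G}
    (h : u.app zero PUnit.unit = v.app zero PUnit.unit) : u = v := by
  ext k x
  cases k
  · exact h
  · cases x
    · exact (walkingEdge_hom_app_false u).trans <|
        (congrArg (G.map left) h).trans (walkingEdge_hom_app_false v).symm
    · exact (walkingEdge_hom_app_true u).trans <|
        (congrArg (G.map right) h).trans (walkingEdge_hom_app_true v).symm

end Gph

open Gph in
theorem hasLiftingProperty_srcNode_iff {G H : Gph} (p : G ⟶ H) :
    HasLiftingProperty srcNode p ↔ ∀ v, LiftsEdgesFrom p v := by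
  constructor
  · intro _ v e he
    have sq : CommSq (nodeHom v) srcNode p (edgeHom e) :=
      ⟨walkingNode_hom_ext he.symm⟩
    refine ⟨sq.lift.app zero PUnit.unit, ?_, ?_⟩
    · rw [← walkingEdge_hom_app_false]
      exact ConcreteCategory.congr_hom (congr_app sq.fac_left one) PUnit.unit
    · exact ConcreteCategory.congr_hom (congr_app sq.fac_right zero) PUnit.unit
  · refine fun hp => ⟨fun {u v} sq => ?_⟩
    have he : H.map left (v.app zero PUnit.unit) = p.app one (u.app one PUnit.unit) :=
      (walkingEdge_hom_app_false v).symm.trans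
        (ConcreteCategory.congr_hom (congr_app sq.w one) PUnit.unit).symm
    obtain ⟨e', hsrc, hlift⟩ := hp _ _ he
    exact ⟨⟨⟨edgeHom e', walkingNode_hom_ext hsrc, walkingEdge_hom_ext hlift⟩⟩⟩

section Cube

variable {W X Y Z A B C D : Gph} {f : W ⟶ Y} {g : W ⟶ X} {f' : Y ⟶ Z} {g' : X ⟶ Z}
  {i : A ⟶ C} {j : A ⟶ B} {i' : C ⟶ D} {j' : B ⟶ D}
  {w : W ⟶ A} {lam₁ : X ⟶ B} {lam₂ : Y ⟶ C} {μ : Z ⟶ D}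

open NatTrans in
theorem liftsEdgesFrom_of_cube (htop : f ≫ f' = g ≫ g') (hbot : IsPushout i j i' j')
    [Mono i] [Mono i'] (hback₁ : g ≫ lam₁ = w ≫ j) (hback₂ : IsPullback f w lam₂ i)
    (hfront₁ : g' ≫ μ = lam₁ ≫ j') (hfront₂ : f' ≫ μ = lam₂ ≫ i')
    [HasLiftingProperty srcNode lam₁] [HasLiftingProperty srcNode lam₂] (y : Y.obj one) :
    LiftsEdgesFrom μ (f'.app one y) := by
  have hlam₁ := (hasLiftingProperty_srcNode_iff lam₁).mp ‹_›
  have hlam₂ := (hasLiftingProperty_srcNode_iff lam₂).mp ‹_›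
  intro e he
  obtain ⟨c, rfl⟩ | ⟨b, rfl⟩ := Types.eq_or_eq_of_isPushout (hbot.app zero) e
  · have hc : C.map left c = lam₂.app one y :=
      (mono_iff_injective (i'.app one)).mp inferInstance <| by
        rw [naturality_apply, he, app_app_eq_of_comp_eq hfront₂]
    obtain ⟨e', hsrc, hlift⟩ := hlam₂ y c hc
    exact ⟨f'.app zero e', by rw [← naturality_apply, hsrc],
      by rw [app_app_eq_of_comp_eq hfront₂, hlift]⟩
  · obtain ⟨a, ha, hb⟩ := Types.exists_of_isPullback
      (Types.isPullback_of_isPushout (hbot.app one)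
        ((mono_iff_injective (i.app one)).mp inferInstance)) (lam₂.app one y) (B.map left b)
      (by rw [naturality_apply, he, app_app_eq_of_comp_eq hfront₂])
    obtain ⟨u, hu, hw⟩ := Types.exists_of_isPullback (hback₂.app one) y a ha.symm
    obtain ⟨e', hsrc, hlift⟩ := hlam₁ (g.app one u) b <| by
      rw [app_app_eq_of_comp_eq hback₁, hw, hb]
    exact ⟨g'.app zero e',
      by rw [← naturality_apply, hsrc, ← app_app_eq_of_comp_eq htop, hu],
      by rw [app_app_eq_of_comp_eq hfront₁, hlift]⟩

end Cube

theorem cube_one_fibration_general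
    {W X Y Z A B C D : Gph}
    -- top pushout: Z is the pushout of Y ← W → X, with W → Y and W → X monos
    (f : W ⟶ Y) (g : W ⟶ X)
    (f' : Y ⟶ Z) (g' : X ⟶ Z) (Htop : IsPushout f g f' g')
    -- bottom pushout: D is the pushout of C ← A → B along monos i : A ⟶ C, j : A ⟶ B
    (i : A ⟶ C) (j : A ⟶ B) [Mono i] [Mono j]
    (i' : C ⟶ D) (j' : B ⟶ D) [Mono i'] [Mono j'] (Hbot : IsPushout i j i' j')
    -- vertical maps
    (w : W ⟶ A) (lam₁ : X ⟶ B) (lam₂ : Y ⟶ C) (μ : Z ⟶ D)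
    -- back faces are pullbacks
    (hback₁ : IsPullback g w lam₁ j) (hback₂ : IsPullback f w lam₂ i)
    -- front faces commute
    (hfront₁ : g' ≫ μ = lam₁ ≫ j') (hfront₂ : f' ≫ μ = lam₂ ≫ i')
    -- fibration hypotheses
    [HasLiftingProperty srcNode lam₁] [HasLiftingProperty srcNode lam₂] :
    HasLiftingProperty srcNode μ := by
  rw [hasLiftingProperty_srcNode_iff]
  intro z
  obtain ⟨y, rfl⟩ | ⟨x, rfl⟩ := Types.eq_or_eq_of_isPushout (Htop.app one) z
  · exact liftsEdgesFrom_of_cube Htop.w Hbot hback₁.w hback₂ hfront₁ hfront₂ y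
  · exact liftsEdgesFrom_of_cube Htop.w.symm Hbot.flip hback₂.w hback₁ hfront₂ hfront₁ x

/-- Given a commutative cube of graphs in which the top and bottom faces are pushouts along
monomorphisms, the back vertical faces are pullbacks, the back vertical maps `λ₁ : X ⟶ B`
and `λ₂ : Y ⟶ C` as well as the legs `i`, `j` of the bottom span are 1-fibrations (right
lifting property against `srcNode`), and `i, i', j, j'` are monomorphisms, the induced map
`μ : Z ⟶ D` between the pushouts is a 1-fibration as well. -/
theorem cube_one_fibration
    {W X Y Z A B C D : Gph}
    -- top pushout: Z is the pushout of Y ← W → X, with W → Y and W → X monos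
    (f : W ⟶ Y) (g : W ⟶ X) [Mono f] [Mono g]
    (f' : Y ⟶ Z) (g' : X ⟶ Z) (Htop : IsPushout f g f' g')
    -- bottom pushout: D is the pushout of C ← A → B along monos i : A ⟶ C, j : A ⟶ B
    (i : A ⟶ C) (j : A ⟶ B) [Mono i] [Mono j]
    (i' : C ⟶ D) (j' : B ⟶ D) [Mono i'] [Mono j'] (Hbot : IsPushout i j i' j')
    -- vertical maps
    (w : W ⟶ A) (lam₁ : X ⟶ B) (lam₂ : Y ⟶ C) (μ : Z ⟶ D)
    -- back faces are pullbacks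
    (hback₁ : IsPullback g w lam₁ j) (hback₂ : IsPullback f w lam₂ i)
    -- front faces commute
    (hfront₁ : g' ≫ μ = lam₁ ≫ j') (hfront₂ : f' ≫ μ = lam₂ ≫ i')
    -- fibration hypotheses
    [HasLiftingProperty srcNode lam₁] [HasLiftingProperty srcNode lam₂]
    [HasLiftingProperty srcNode i] [HasLiftingProperty srcNode j] :
    HasLiftingProperty srcNode μ :=
  cube_one_fibration_general f g f' g' Htop i j i' j' Hbot w lam₁ lam₂ μ hback₁ hback₂ hfront₁
    hfront₂
end

section
/- Monomorphisms whose pullback against another mono is initial yield a coproduct subobject: if i : A ↪ X and j : B ↪ X are monomorphisms in an adhesive category (or a topos) with A ×_X B ≅ 0 (strict initial), then the induced map A + B → X is a monomorphism. -/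
/-!
The union of two subobjects of an object in an adhesive category is the pushout over their
intersection, and the comparison map from that pushout is a monomorphism
(Lack–Sobociński, `Adhesive.desc_mono_of_mono`). When the intersection is initial, the pushout
over it is just the coproduct.
-/

open CategoryTheory CategoryTheory.Limits

namespace CategoryTheory

variable {𝒞 : Type*} [Category 𝒞]

lemma IsPushout.of_isInitial_coprod {P A B : 𝒞} (hP : IsInitial P) (p : P ⟶ A) (q : P ⟶ B)
    [HasBinaryCoproduct A B] : IsPushout p q (coprod.inl : A ⟶ A ⨿ B) coprod.inr := by
  rw [hP.hom_ext p (hP.to A), hP.hom_ext q (hP.to B)]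
  exact IsPushout.of_is_coproduct (coprodIsCoprod A B) hP

lemma Adhesive.mono_desc_of_isPullback [Adhesive 𝒞] {P A B X Q : 𝒞} {p : P ⟶ A} {q : P ⟶ B}
    {i : A ⟶ X} {j : B ⟶ X} {u : A ⟶ Q} {v : B ⟶ Q} [Mono i] [Mono j]
    (hpb : IsPullback p q i j) (hpo : IsPushout p q u v) : Mono (hpo.desc i j hpb.w) := by
  have hpo' : IsPushout (pullback.fst i j) (pullback.snd i j) u v :=
    hpo.of_iso hpb.isoPullback (Iso.refl _) (Iso.refl _) (Iso.refl _)
      (by simp) (by simp) (by simp) (by simp)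
  have hdesc : hpo.desc i j hpb.w = hpo'.isoPushout.hom ≫ pushout.desc i j pullback.condition :=
    hpo.hom_ext (by rw [hpo.inl_desc, hpo'.inl_isoPushout_hom_assoc, pushout.inl_desc])
      (by rw [hpo.inr_desc, hpo'.inr_isoPushout_hom_assoc, pushout.inr_desc])
  rw [hdesc]
  infer_instance

end CategoryTheory

theorem coprod_desc_mono_of_initial_pullback_general {𝒞 : Type*} [Category 𝒞]
    [Adhesive 𝒞] [HasBinaryCoproducts 𝒞]
    {A B X P : 𝒞} (i : A ⟶ X) (j : B ⟶ X) [Mono i] [Mono j]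
    (p : P ⟶ A) (q : P ⟶ B) (hpb : IsPullback p q i j) (hinit : IsInitial P) :
    Mono (coprod.desc i j) := by
  have hpo := IsPushout.of_isInitial_coprod hinit p q
  have hdesc : coprod.desc i j = hpo.desc i j hpb.w :=
    hpo.hom_ext (by rw [coprod.inl_desc, hpo.inl_desc]) (by rw [coprod.inr_desc, hpo.inr_desc])
  rw [hdesc]
  exact Adhesive.mono_desc_of_isPullback hpb hpo

/-- In an adhesive category with a strict initial object, two monomorphisms `i : A ⟶ X`
and `j : B ⟶ X` whose pullback `A ×_X B` is initial induce a monomorphism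
`[i, j] : A ⨿ B ⟶ X` from the coproduct. -/
theorem coprod_desc_mono_of_initial_pullback {𝒞 : Type*} [Category 𝒞]
    [Adhesive 𝒞] [HasInitial 𝒞] [HasStrictInitialObjects 𝒞] [HasBinaryCoproducts 𝒞]
    {A B X P : 𝒞} (i : A ⟶ X) (j : B ⟶ X) [Mono i] [Mono j]
    (p : P ⟶ A) (q : P ⟶ B) (hpb : IsPullback p q i j) (hinit : IsInitial P) :
    Mono (coprod.desc i j) :=
  coprod_desc_mono_of_initial_pullback_general i j p q hpb hinit
end
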